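/- Let p and q be primes with p ≡ 5 (mod 8) and q ≡ 3 (mod 8). Then there are no integers x, y₁, y₂ satisfying either (x + 1 = y₁² and x - 1 = 2pq·y₂²) or (x - 1 = y₁² and x + 1 = 2pq·y₂²). -/
import Mathlib


open IntermediateField NumberField

/-- The quadratic field `ℚ(√m)` realized inside `ℂ` (for `m` of either sign). -/
noncomputable def quadField (m : ℤ) : IntermediateField ℚ ℂ :=
  IntermediateField.adjoin ℚ {z : ℂ | z ^ 2 = (m : ℂ)}

/-- The 2-class group of a number field `K ⊆ ℂ`: the 2-primary component
(= 2-Sylow subgroup) of the ideal class group of its ring of integers. -/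
noncomputable def twoClassGroup (K : IntermediateField ℚ ℂ) :
    Subgroup (ClassGroup (𝓞 K)) :=
  CommGroup.primaryComponent _ 2

/-- `h₂(m)`: the 2-class number of the quadratic field `ℚ(√m)`. -/
noncomputable def h2 (m : ℤ) : ℕ := Nat.card (twoClassGroup (quadField m))

/-- `L_{n,d} = ℚ(ζ_{2^{n+2}}, √d)`, the `n`-th layer of the cyclotomic
`ℤ₂`-extension of `ℚ(√d, √-1)`. -/
noncomputable def Lfield (n : ℕ) (d : ℤ) : IntermediateField ℚ ℂ :=
  IntermediateField.adjoin ℚ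
    ({z : ℂ | z ^ 2 ^ (n + 2) = 1} ∪ {z : ℂ | z ^ 2 = (d : ℂ)})

/-- `ℚ(ζ_{2^{n+2}} + ζ_{2^{n+2}}⁻¹, √d) = ℚ(2cos(2π/2^{n+2}), √d)`.
For `d > 0` this is the maximal real subfield `L_{n,d}⁺` of `L_{n,d}`;
for `d < 0` it is the `n`-th layer `K_{n,|d|}` of the cyclotomic
`ℤ₂`-extension of the imaginary quadratic field `ℚ(√d)`. -/
noncomputable def LplusField (n : ℕ) (d : ℤ) : IntermediateField ℚ ℂ :=
  IntermediateField.adjoin ℚ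
    ({((2 * Real.cos (2 * Real.pi / 2 ^ (n + 2)) : ℝ) : ℂ)} ∪ {z : ℂ | z ^ 2 = (d : ℂ)})

/-- for primes `p ≡ 5 (mod 8)` and `q ≡ 3 (mod 8)`, there are no
integers `x, y₁, y₂` with `x + 1 = y₁²` and `x - 1 = 2pq·y₂²`, nor with
`x - 1 = y₁²` and `x + 1 = 2pq·y₂²`. -/
theorem no_integer_solutions_pell_factorization
    (p q : ℕ) (hp : p.Prime) (hq : q.Prime)
    (hp8 : p % 8 = 5) (hq8 : q % 8 = 3) :
    ¬ ∃ x y₁ y₂ : ℤ,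
      (x + 1 = y₁ ^ 2 ∧ x - 1 = 2 * (p : ℤ) * q * y₂ ^ 2) ∨
      (x - 1 = y₁ ^ 2 ∧ x + 1 = 2 * (p : ℤ) * q * y₂ ^ 2) := by
  rintro ⟨x, y₁, y₂, ⟨h1, h2⟩ | ⟨h1, h2⟩⟩
  -- In both cases, y₁² and 2pq·y₂² differ by 2, so y₁ is even.
  · -- y₁² = 2pq y₂² + 2
    have hy : y₁ ^ 2 = 2 * (p : ℤ) * q * y₂ ^ 2 + 2 := by omega
    have heven : Even y₁ := by
      have h2' : Even (y₁ ^ 2) := ⟨(p : ℤ) * q * y₂ ^ 2 + 1, by linarith⟩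
      exact (Int.even_pow.mp h2').1
    obtain ⟨a, ha⟩ := heven
    subst ha
    have key : 2 * a ^ 2 = (p : ℤ) * q * y₂ ^ 2 + 1 := by nlinarith
    -- reduce mod p: (2a)² = 2, but 2 is not a square mod p
    haveI : Fact p.Prime := ⟨hp⟩
    have hp2 : p ≠ 2 := by omega
    have hsq : IsSquare (2 : ZMod p) := by
      refine ⟨2 * (a : ZMod p), ?_⟩
      have := congrArg (Int.cast : ℤ → ZMod p) key
      push_cast at this
      rw [ZMod.natCast_self] at this
      linear_combination -2 * this
    rw [ZMod.exists_sq_eq_two_iff hp2] at hsq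
    omega
  · -- 2pq y₂² = y₁² + 2
    have hy : 2 * (p : ℤ) * q * y₂ ^ 2 = y₁ ^ 2 + 2 := by omega
    have heven : Even y₁ := by
      have h2' : Even (y₁ ^ 2) := ⟨(p : ℤ) * q * y₂ ^ 2 - 1, by linarith⟩
      exact (Int.even_pow.mp h2').1
    obtain ⟨a, ha⟩ := heven
    subst ha
    have key : (p : ℤ) * q * y₂ ^ 2 = 2 * a ^ 2 + 1 := by nlinarith
    -- reduce mod 8
    have h8 : ∀ A B : ZMod 8, 5 * 3 * B ^ 2 ≠ 2 * A ^ 2 + 1 := by decide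
    have := congrArg (Int.cast : ℤ → ZMod 8) key
    push_cast at this
    have hpc : (p : ZMod 8) = 5 := by
      have : ((p % 8 : ℕ) : ZMod 8) = (p : ZMod 8) := ZMod.natCast_mod p 8 ▸ rfl
      rw [← this, hp8]; rfl
    have hqc : (q : ZMod 8) = 3 := by
      have : ((q % 8 : ℕ) : ZMod 8) = (q : ZMod 8) := ZMod.natCast_mod q 8 ▸ rfl
      rw [← this, hq8]; rfl
    rw [hpc, hqc] at this
    exact h8 (a : ZMod 8) (y₂ : ZMod 8) this
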